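/- Let n ≥ 1, let q_n = (n+1)^n − 1 and c_n = n·q_n. In the one-relator presented group ⟨x, t | ρ_n(x,t)⟩, the commutator [(t x t⁻¹)^n, x^n] equals x^{c_n}. -/

import Mathlib

/-!
Writing `y = t x t⁻¹`, the relation `ρ_n` says `y x y⁻¹ = x^(n+1)`. Iterating,
`yᵏ x y⁻ᵏ = x^((n+1)^k)`, so conjugation by `yⁿ` sends `xⁿ` to `x^(n (n+1)^n)`, and the
commutator `[yⁿ, xⁿ] = x^(n (n+1)^n) x^(-n)` is `x^(n ((n+1)^n - 1))`.
-/

/-- The word `ρ_k(x,t) = (t x t⁻¹) x (t x t⁻¹)⁻¹ x^{-(k+1)}`, evaluated at elements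
`x`, `t` of a group. -/
def rhoWord {G : Type*} [Group G] (k : ℕ) (x t : G) : G :=
  (t * x * t⁻¹) * x * (t * x * t⁻¹)⁻¹ * x ^ (-(k + 1 : ℤ))

open scoped commutatorElement

section Conjugation

variable {G : Type*} [Group G] {x y : G} {m : ℕ}

theorem pow_mul_mul_inv_pow_eq_pow_pow (h : y * x * y⁻¹ = x ^ m) (k : ℕ) :
    y ^ k * x * (y ^ k)⁻¹ = x ^ (m ^ k) := by
  induction k with
  | zero => simp
  | succ k ih =>
    calc y ^ (k + 1) * x * (y ^ (k + 1))⁻¹ = y * (y ^ k * x * (y ^ k)⁻¹) * y⁻¹ := by group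
      _ = (y * x * y⁻¹) ^ (m ^ k) := by rw [ih, conj_pow]
      _ = x ^ (m ^ (k + 1)) := by rw [h, ← pow_mul, pow_succ, Nat.mul_comm]

theorem commutatorElement_pow_pow_eq_pow (h : y * x * y⁻¹ = x ^ m) (k j : ℕ) :
    ⁅y ^ k, x ^ j⁆ = x ^ (j * (m ^ k - 1)) := by
  rcases Nat.eq_zero_or_pos m with rfl | hm
  · obtain rfl : x = 1 := conj_eq_one_iff.mp (h.trans (pow_zero x))
    simp
  have hconj : y ^ k * x ^ j * (y ^ k)⁻¹ = x ^ (j * (m ^ k - 1) + j) := by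
    rw [← conj_pow, pow_mul_mul_inv_pow_eq_pow_pow h, ← pow_mul,
      Nat.mul_sub_one, Nat.sub_add_cancel (Nat.le_mul_of_pos_right j (Nat.pow_pos hm)),
      Nat.mul_comm]
  rw [commutatorElement_def, hconj, pow_add, mul_inv_cancel_right]

end Conjugation

theorem rhoWord_eq_one_iff {G : Type*} [Group G] (k : ℕ) (x t : G) :
    rhoWord k x t = 1 ↔ (t * x * t⁻¹) * x * (t * x * t⁻¹)⁻¹ = x ^ (k + 1) := by
  rw [rhoWord, mul_eq_one_iff_eq_inv, ← zpow_neg, neg_neg]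
  norm_cast

theorem map_rhoWord {G H : Type*} [Group G] [Group H] (f : G →* H) (k : ℕ) (x t : G) :
    f (rhoWord k x t) = rhoWord k (f x) (f t) := by
  simp only [rhoWord, map_mul, map_inv, map_zpow]

theorem commutator_eq_pow_c_general (n : ℕ)
    (X T : PresentedGroup ({rhoWord n (FreeGroup.of 0) (FreeGroup.of 1)} :
      Set (FreeGroup (Fin 2))))
    (hX : X = PresentedGroup.of 0) (hT : T = PresentedGroup.of 1) :
    ⁅(T * X * T⁻¹) ^ n, X ^ n⁆ = X ^ (n * ((n + 1) ^ n - 1)) := by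
  have hrel : rhoWord n X T = 1 := by
    rw [hX, hT, PresentedGroup.of, PresentedGroup.of, ← map_rhoWord]
    exact PresentedGroup.one_of_mem rfl
  exact commutatorElement_pow_pow_eq_pow ((rhoWord_eq_one_iff n X T).mp hrel) n n

/-- In the one-relator presented group `⟨x, t | ρ_n(x,t)⟩` (with `n ≥ 1`),
setting `q_n = (n+1)^n - 1` and `c_n = n * q_n`, the commutator
`[(t x t⁻¹)^n, x^n]` equals `x^{c_n}`. -/
theorem commutator_eq_pow_c (n : ℕ) (hn : 1 ≤ n)
    (X T : PresentedGroup ({rhoWord n (FreeGroup.of 0) (FreeGroup.of 1)} :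
      Set (FreeGroup (Fin 2))))
    (hX : X = PresentedGroup.of 0) (hT : T = PresentedGroup.of 1) :
    ⁅(T * X * T⁻¹) ^ n, X ^ n⁆ = X ^ (n * ((n + 1) ^ n - 1)) :=
  commutator_eq_pow_c_general n X T hX hT
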